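/- arXiv:2406.15852 — 2 statements merged into one kernel-verified Lean document; each statement's English description precedes it below -/
import Mathlib

section
/- For any pair of vertices a, b in a connected graph G with unit edge resistances, the expected commute time of the simple random walk satisfies E[C_{ab}] = 2·|E(G)|·R_{ab}, where R_{ab} is the effective resistance between a and b. -/
/-!
Write `m` for the number of edges and `L` for the Laplacian. The hitting-time equations for
`h_{ab}` say that `(L h_{ab}) v = deg v` for every `v ≠ b`; since the entries of `L x` always
sum to `0` and the degrees sum to `2m`, this forces `L h_{ab} = deg - 2m e_b`, and likewise
`L h_{ba} = deg - 2m e_a`. Hence `h_{ab} - h_{ba} - 2m f` lies in the kernel of `L`, so it is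
constant on the connected graph `G`; comparing its values at `a` and `b` gives the identity.
-/

open Matrix Finset

namespace SimpleGraph

variable {V R : Type*} [Fintype V] [DecidableEq V] [CommRing R]
  (G : SimpleGraph V) [DecidableRel G.Adj]

theorem sum_lapMatrix_mulVec (x : V → R) : ∑ v, (G.lapMatrix R *ᵥ x) v = 0 := by
  rw [← one_dotProduct, dotProduct_mulVec, ← mulVec_transpose, (G.isSymm_lapMatrix R).eq]
  exact (congrArg (· ⬝ᵥ x) G.lapMatrix_mulVec_const_eq_zero).trans (zero_dotProduct x)

theorem lapMatrix_mulVec_eq_degree_sub_single {c : V} {h : V → R}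
    (heq : ∀ v, v ≠ c →
      (G.degree v : R) * h v = G.degree v + ∑ u ∈ G.neighborFinset v, h u) :
    G.lapMatrix R *ᵥ h =
      (fun v ↦ (G.degree v : R)) - (2 * #G.edgeFinset : R) • Pi.single c 1 := by
  set g := G.lapMatrix R *ᵥ h -
    ((fun v ↦ (G.degree v : R)) - (2 * #G.edgeFinset : R) • Pi.single c 1)
  have hg_off : ∀ v, v ≠ c → g v = 0 := fun v hv ↦ by
    simp [g, G.lapMatrix_mulVec_apply, heq v hv, hv]
  have hg_sum : ∑ v, g v = 0 := by
    have hdeg : ∑ v, (G.degree v : R) = 2 * #G.edgeFinset :=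
      mod_cast congrArg (Nat.cast : ℕ → R) G.sum_degrees_eq_twice_card_edges
    simp [g, sum_sub_distrib, G.sum_lapMatrix_mulVec, hdeg, ← mul_sum]
  have hg_c : g c = 0 := by
    rwa [sum_eq_single c (fun v _ hv ↦ hg_off v hv) (by simp)] at hg_sum
  rw [← sub_eq_zero]
  ext v
  obtain rfl | hv := eq_or_ne v c
  exacts [hg_c, hg_off v hv]

end SimpleGraph

/-- `hab` and `hba` are the expected hitting times of `b` and of `a`, pinned down by their
first-step equations; `(e_a - e_b) ⬝ᵥ f` is the effective resistance
`(e_a - e_b)ᵀ L⁺ (e_a - e_b)` for any solution `f` of `L f = e_a - e_b`. -/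
theorem commute_time_eq_two_mul_edges_mul_resistance
    {V : Type*} [Fintype V] [DecidableEq V]
    (G : SimpleGraph V) [DecidableRel G.Adj] (hG : G.Connected)
    (a b : V)
    (hab hba : V → ℝ)
    (hab_b : hab b = 0)
    (hab_eq : ∀ v, v ≠ b →
      (G.degree v : ℝ) * hab v = (G.degree v : ℝ) + ∑ u ∈ G.neighborFinset v, hab u)
    (hba_a : hba a = 0)
    (hba_eq : ∀ v, v ≠ a →
      (G.degree v : ℝ) * hba v = (G.degree v : ℝ) + ∑ u ∈ G.neighborFinset v, hba u)
    (f : V → ℝ)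
    (hf : G.lapMatrix ℝ *ᵥ f = (Pi.single a 1 - Pi.single b 1)) :
    hab a + hba b
      = 2 * (G.edgeFinset.card : ℝ) * ((Pi.single a 1 - Pi.single b 1) ⬝ᵥ f) := by
  have hker : G.lapMatrix ℝ *ᵥ (hab - hba - (2 * #G.edgeFinset : ℝ) • f) = 0 := by
    rw [mulVec_sub, mulVec_sub, mulVec_smul, G.lapMatrix_mulVec_eq_degree_sub_single hab_eq,
      G.lapMatrix_mulVec_eq_degree_sub_single hba_eq, hf]
    module
  have hconst := G.lapMatrix_mulVec_eq_zero_iff_forall_reachable.mp hker a b (hG a b)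
  simp only [Pi.sub_apply, Pi.smul_apply, smul_eq_mul, hab_b, hba_a] at hconst
  simp only [sub_dotProduct, single_one_dotProduct]
  linarith
end

section
/- Effective resistance R_{ab} = (e_a - e_b)ᵀ L⁺ (e_a - e_b) on a connected graph is a metric on the vertex set: it is nonnegative, zero iff a = b, symmetric, and satisfies the triangle inequality R_{ac} ≤ R_{ab} + R_{bc}. -/
/-!
A potential `u` with `L u = e_a - e_b` is harmonic away from `a` and `b`, so on a connected graph
the minimum principle puts its minimum at `b` and its maximum at `a`. Hence
`R_{ab} = u a - u b ≥ 0`, with equality only if `u` is constant, i.e. `e_a = e_b`.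
As `L` determines a potential up to an additive constant, `u_{ba} ≡ -u_{ab}` and
`u_{ac} ≡ u_{ab} + u_{bc}`, which gives symmetry and
`R_{ac} = (u_{ab} a - u_{ab} c) + (u_{bc} a - u_{bc} c) ≤ R_{ab} + R_{bc}`,
since `u_{ab}` is minimal and `u_{bc}` maximal at `b`.
-/

open Matrix Finset

namespace SimpleGraph

variable {V : Type*} [Fintype V] [DecidableEq V] {G : SimpleGraph V} [DecidableRel G.Adj]

theorem lapMatrix_mulVec_apply_eq_sum_sub (u : V → ℝ) (x : V) :
    (G.lapMatrix ℝ *ᵥ u) x = ∑ y ∈ G.neighborFinset x, (u x - u y) := by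
  rw [lapMatrix_mulVec_apply, sum_sub_distrib, sum_const, card_neighborFinset_eq_degree,
    nsmul_eq_mul]

/-- Minimum principle: a function that is superharmonic away from `b` attains its minimum at
`b`. -/
theorem le_of_lapMatrix_mulVec_nonneg (hG : G.Connected) {u : V → ℝ} {b : V}
    (hu : ∀ x ≠ b, 0 ≤ (G.lapMatrix ℝ *ᵥ u) x) (x : V) : u b ≤ u x := by
  obtain ⟨x₀, -, hx₀⟩ := exists_min_image univ u ⟨x, mem_univ x⟩
  by_contra! hb
  have hb₀ : u x₀ < u b := (hx₀ x (mem_univ x)).trans_lt hb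
  obtain ⟨d, -, hd_fst, hd_snd⟩ := (hG.preconnected x₀ b).some.exists_boundary_dart
    {v | u v = u x₀} rfl hb₀.ne'
  have hfst : u d.fst = u x₀ := hd_fst
  have hterm_nonpos : ∀ y ∈ G.neighborFinset d.fst, u d.fst - u y ≤ 0 := fun y _ => by
    linarith [hx₀ y (mem_univ y)]
  have hsum_zero : ∑ y ∈ G.neighborFinset d.fst, (u d.fst - u y) = 0 :=
    le_antisymm (sum_nonpos hterm_nonpos) <| lapMatrix_mulVec_apply_eq_sum_sub (G := G) u d.fst ▸
      hu d.fst (by rintro h; exact hb₀.ne' (h ▸ hfst))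
  have hsnd := (sum_eq_zero_iff_of_nonpos hterm_nonpos).mp hsum_zero d.snd
    ((G.mem_neighborFinset d.fst d.snd).mpr d.adj)
  exact hd_snd (show u d.snd = u x₀ by linarith)

section Potential

variable {a b : V} {u : V → ℝ} (hu : G.lapMatrix ℝ *ᵥ u = Pi.single a 1 - Pi.single b 1)
include hu

theorem potential_sink_le (hG : G.Connected) (x : V) : u b ≤ u x :=
  le_of_lapMatrix_mulVec_nonneg hG (fun y hy => by
    rw [hu, Pi.sub_apply, Pi.single_eq_of_ne hy, sub_zero, Pi.single_apply]
    split_ifs <;> norm_num) x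

theorem potential_le_source (hG : G.Connected) (x : V) : u x ≤ u a := by
  have hneg : G.lapMatrix ℝ *ᵥ -u = Pi.single b 1 - Pi.single a 1 := by
    rw [mulVec_neg, hu, neg_sub]
  simpa using potential_sink_le hneg hG x

end Potential

theorem sub_eq_sub_of_lapMatrix_mulVec_eq (hG : G.Connected) {u v : V → ℝ}
    (h : G.lapMatrix ℝ *ᵥ u = G.lapMatrix ℝ *ᵥ v) (x y : V) : u x - u y = v x - v y := by
  have hker : G.lapMatrix ℝ *ᵥ (u - v) = 0 := by rw [mulVec_sub, h, sub_self]
  have := (lapMatrix_mulVec_eq_zero_iff_forall_reachable G).mp hker x y (hG.preconnected x y)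
  simp only [Pi.sub_apply] at this
  linarith

end SimpleGraph

open SimpleGraph

theorem single_sub_single_dotProduct {V : Type*} [Fintype V] [DecidableEq V]
    (a b : V) (u : V → ℝ) : (Pi.single a 1 - Pi.single b 1) ⬝ᵥ u = u a - u b := by
  simp [sub_dotProduct, single_dotProduct]

/-- Effective resistance `R_{ab} = (e_a - e_b)ᵀ L⁺ (e_a - e_b)` on a connected
graph is a metric (Klein–Randić): nonnegative, zero iff the vertices coincide,
symmetric, and satisfying the triangle inequality. Here `L⁺(e_a - e_b)` is
represented by any solution `f a b` of the Laplacian system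
`L (f a b) = e_a - e_b`. -/
theorem effective_resistance_is_metric
    {V : Type*} [Fintype V] [DecidableEq V]
    (G : SimpleGraph V) [DecidableRel G.Adj] (hG : G.Connected)
    (f : V → V → V → ℝ)
    (hf : ∀ a b, G.lapMatrix ℝ *ᵥ f a b = (Pi.single a 1 - Pi.single b 1)) :
    let R : V → V → ℝ := fun a b => (Pi.single a 1 - Pi.single b 1) ⬝ᵥ f a b
    (∀ a b, 0 ≤ R a b)
    ∧ (∀ a b, R a b = 0 ↔ a = b)
    ∧ (∀ a b, R a b = R b a)
    ∧ (∀ a b c, R a c ≤ R a b + R b c) := by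
  intro R
  have hR : ∀ a b, R a b = f a b a - f a b b := fun a b => single_sub_single_dotProduct a b _
  have hsink := fun a b => potential_sink_le (hf a b) hG
  have hsource := fun a b => potential_le_source (hf a b) hG
  refine ⟨fun a b => by linarith [hR a b, hsink a b a], fun a b => ⟨fun h0 => ?_, ?_⟩,
    fun a b => ?_, fun a b c => ?_⟩
  · have hconst : G.lapMatrix ℝ *ᵥ f a b = 0 :=
      (lapMatrix_mulVec_eq_zero_iff_forall_reachable G).mpr fun x y _ => by
        linarith [hR a b, hsink a b x, hsink a b y, hsource a b x, hsource a b y]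
    have := congrFun (hf a b ▸ hconst) a
    by_contra hab
    simp [hab] at this
  · rintro rfl
    rw [hR, sub_self]
  · have h := sub_eq_sub_of_lapMatrix_mulVec_eq hG (u := f a b) (v := -f b a)
      (by rw [mulVec_neg, hf, hf]; abel) a b
    simp only [Pi.neg_apply] at h
    linarith [hR a b, hR b a]
  · have h := sub_eq_sub_of_lapMatrix_mulVec_eq hG (u := f a c) (v := f a b + f b c)
      (by rw [mulVec_add, hf, hf, hf]; abel) a c
    simp only [Pi.add_apply] at h
    linarith [hR a b, hR b c, hR a c, hsink a b c, hsource b c a]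
end
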